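/- Over the frame (ℕ,<), a monotone hybrid formula φ ∈ MHL(□,@) (no negation, no ◇, no ↓) is satisfiable (i.e., there exist a valuation η : NOM → ℕ and k ∈ ℕ with η,k ⊨ φ) if and only if η₀,0 ⊨ φ, where η₀ is the valuation that maps every nominal to 0. -/

import Mathlib

/-!
Under the valuation η₀ sending every nominal to 0, no positive point is named, so all positive
points satisfy the same formulas. By induction on φ one shows simultaneously: if φ holds somewhere
under some η, it holds at 0 under η₀; and if φ holds at arbitrarily large points under some η, it
holds at every positive point under η₀. Truth of `□α` at any point forces `α` eventually, which the
second claim turns into `α` at every positive point, i.e. `□α` at 0 under η₀; conversely `@ᵢα` at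
a positive point under η₀ only needs `α` at 0, which the first claim supplies.
-/

open Filter

/-- Formulas of monotone hybrid logic MHL(□,@) over nominals. -/
inductive HForm : Type
  | nom : ℕ → HForm
  | top : HForm
  | bot : HForm
  | conj : HForm → HForm → HForm
  | disj : HForm → HForm → HForm
  | box : HForm → HForm
  | at_ : ℕ → HForm → HForm

/-- Satisfaction over the frame (ℕ,<) with nominal valuation η. -/
def sat (η : ℕ → ℕ) (k : ℕ) : HForm → Prop
  | .nom i => η i = k
  | .top => True
  | .bot => False
  | .conj a b => sat η k a ∧ sat η k b
  | .disj a b => sat η k a ∨ sat η k b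
  | .box a => ∀ k' > k, sat η k' a
  | .at_ i a => sat η (η i) a

theorem sat_zero_of_sat_and_sat_pos_of_frequently (φ : HForm) :
    (∀ η k, sat η k φ → sat (fun _ => 0) 0 φ) ∧
      ∀ η, (∃ᶠ k in atTop, sat η k φ) → ∀ m > 0, sat (fun _ => 0) m φ := by
  induction φ with
  | nom i =>
    refine ⟨fun _ _ _ => rfl, fun η h m _ => ?_⟩
    obtain ⟨k, hk, hne⟩ := (h.and_eventually (eventually_ne_atTop (η i))).exists
    exact absurd hk.symm hne
  | top => exact ⟨fun _ _ _ => trivial, fun _ _ _ _ => trivial⟩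
  | bot => exact ⟨fun _ _ h => h, fun _ h _ _ => h.exists.elim fun _ hk => hk⟩
  | conj a b iha ihb =>
    exact ⟨fun η k h => ⟨iha.1 η k h.1, ihb.1 η k h.2⟩, fun η h m hm =>
      ⟨iha.2 η (h.mono fun _ => And.left) m hm, ihb.2 η (h.mono fun _ => And.right) m hm⟩⟩
  | disj a b iha ihb =>
    exact ⟨fun η k h => h.imp (iha.1 η k) (ihb.1 η k), fun η h m hm =>
      (frequently_or_distrib.1 h).imp (fun ha => iha.2 η ha m hm) (fun hb => ihb.2 η hb m hm)⟩
  | box a iha =>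
    have box_zero : ∀ η k, sat η k a.box → sat (fun _ => 0) 0 a.box := fun η k h =>
      iha.2 η ((eventually_gt_atTop k).mono h).frequently
    refine ⟨box_zero, fun η h m _ m' hm' => ?_⟩
    obtain ⟨k, hk⟩ := h.exists
    exact box_zero η k hk m' (by omega)
  | at_ i a iha =>
    exact ⟨fun η _ h => iha.1 η (η i) h,
      fun η h _ _ => h.exists.elim fun _ hk => iha.1 η (η i) hk⟩

/-- φ ∈ MHL(□,@) is satisfiable over (ℕ,<) iff η₀,0 ⊨ φ where η₀ maps every
nominal to 0. -/
theorem stmt3 (φ : HForm) :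
    (∃ (η : ℕ → ℕ) (k : ℕ), sat η k φ) ↔ sat (fun _ => 0) 0 φ :=
  ⟨fun ⟨η, k, h⟩ => (sat_zero_of_sat_and_sat_pos_of_frequently φ).1 η k h,
    fun h => ⟨_, 0, h⟩⟩
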